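/- Let F : C → D be a weight-exact functor between triangulated categories with weight structures w, w'. Assume the induced functor on hearts HF : Hw → Hw' is full and that every endomorphism in Hw killed by HF is nilpotent. If, for some object M of C and integers m ≤ n, the object F(M) is without weights m,…,n with respect to w', then M is without weights m,…,n with respect to w. -/

import Mathlib

open CategoryTheory Limits Pretriangulated

structure WeightStructure (C : Type*) [Category C] [Preadditive C] [HasZeroObject C]
    [HasShift C ℤ] [∀ n : ℤ, (CategoryTheory.shiftFunctor C n).Additive] [Pretriangulated C] where
  le : Set C
  ge : Set C
  le_retract : ∀ ⦃X Y : C⦄, Y ∈ le → ∀ (i : X ⟶ Y) (r : Y ⟶ X), i ≫ r = 𝟙 X → X ∈ le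
  ge_retract : ∀ ⦃X Y : C⦄, Y ∈ ge → ∀ (i : X ⟶ Y) (r : Y ⟶ X), i ≫ r = 𝟙 X → X ∈ ge
  le_shift : ∀ ⦃X : C⦄, X ∈ le → X⟦(-1 : ℤ)⟧ ∈ le
  ge_shift : ∀ ⦃X : C⦄, X ∈ ge → X⟦(1 : ℤ)⟧ ∈ ge
  orth : ∀ ⦃X Y : C⦄, X ∈ le → Y ∈ ge → ∀ f : X ⟶ Y⟦(1 : ℤ)⟧, f = 0
  decomp : ∀ M : C, ∃ (L R : C) (f : L ⟶ M) (g : M ⟶ R) (δ : R ⟶ L⟦(1 : ℤ)⟧),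
    (Triangle.mk f g δ ∈ distTriang C) ∧ L ∈ le ∧ R⟦(-1 : ℤ)⟧ ∈ ge

namespace WeightStructure

variable {C : Type*} [Category C] [Preadditive C] [HasZeroObject C]
  [HasShift C ℤ] [∀ n : ℤ, (CategoryTheory.shiftFunctor C n).Additive] [Pretriangulated C]
  (w : WeightStructure C)

/-- The class `C_{w ≤ n} = C_{w≤0}[n]`. -/
def Le (n : ℤ) : Set C := {X | X⟦(-n)⟧ ∈ w.le}

/-- The class `C_{w ≥ n} = C_{w≥0}[n]`. -/
def Ge (n : ℤ) : Set C := {X | X⟦(-n)⟧ ∈ w.ge}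

/-- `f, g, δ` form a `k`-weight decomposition triangle of `M`. -/
def IsWeightDecomp (k : ℤ) {A M B : C} (f : A ⟶ M) (g : M ⟶ B) (δ : B ⟶ A⟦(1 : ℤ)⟧) : Prop :=
  (Triangle.mk f g δ ∈ distTriang C) ∧ A ∈ w.Le k ∧ B ∈ w.Ge (k + 1)

/-- `g : M ⟶ N` kills weights `m,…,n`. -/
def KillsWeights (m n : ℤ) {M N : C} (g : M ⟶ N) : Prop :=
  ∃ (A B A' B' : C) (a : A ⟶ M) (b : M ⟶ B) (δ : B ⟶ A⟦(1 : ℤ)⟧)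
    (a' : A' ⟶ N) (b' : N ⟶ B') (δ' : B' ⟶ A'⟦(1 : ℤ)⟧),
    w.IsWeightDecomp n a b δ ∧ w.IsWeightDecomp (m - 1) a' b' δ' ∧ a ≫ g ≫ b' = 0

/-- `M` is without weights `m,…,n`. -/
def WithoutWeights (m n : ℤ) (M : C) : Prop := w.KillsWeights m n (𝟙 M)

end WeightStructure

/-- Iterated composition of an endomorphism. -/
def compPow {C : Type*} [CategoryTheory.Category C] {X : C} (e : X ⟶ X) : ℕ → (X ⟶ X)
  | 0 => CategoryTheory.CategoryStruct.id X
  | (k + 1) => CategoryTheory.CategoryStruct.comp (compPow e k) e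

/-!
Fix an `n`-weight decomposition `a : A ⟶ M` of `M`, an `(m-1)`-weight decomposition
`A' --j--> A --p--> Ā --ε--> A'⟦1⟧` of `A` (so `Ā` has weights in `[m, n]`) and any
`(m-1)`-weight decomposition `b' : M ⟶ B'`. Then `a ≫ b' = p ≫ f` for some `f`, and we show
`p ≫ f = 0`.

Since `F M` has no weights `m, …, n`, the map `F a` factors through `F (j ≫ a)`. Chasing this
through the images of the triangles `A' ⟶ A ⟶ Ā` and `B⟦-1⟧ ⟶ A ⟶ M` writes `𝟙 (F Ā)` as
`F ε ≫ s + t ≫ F (d ≫ p)` with `d ≫ a = 0`. Fullness of `HF`, which propagates to maps from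
`C_{w ≤ k}` to `C_{w ≥ k}`, lifts `s` and `t`, giving `u = ε ≫ g₀` and `g = g₁ ≫ d` with
`F (𝟙 - u - g ≫ p) = 0`. Endomorphisms killed by `F` of objects with weights in a bounded range
are nilpotent, by induction on the length of the range starting from the heart. Finally
`p ≫ u = 0` and `g ≫ p ≫ f = 0` give `p ≫ (𝟙 - u - g ≫ p) ^ k ≫ f = p ≫ f` for all `k`.
-/

namespace CategoryTheory.Pretriangulated

variable {C : Type*} [Category C] [Preadditive C] [HasZeroObject C]
  [HasShift C ℤ] [∀ n : ℤ, (CategoryTheory.shiftFunctor C n).Additive] [Pretriangulated C]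
  {X Y Z W : C} {f : X ⟶ Y} {g : Y ⟶ Z} {h : Z ⟶ X⟦(1 : ℤ)⟧}

lemma Triangle.coyoneda_exact₂_mk (hT : Triangle.mk f g h ∈ distTriang C) (φ : W ⟶ Y)
    (hφ : φ ≫ g = 0) : ∃ ψ : W ⟶ X, φ = ψ ≫ f :=
  coyoneda_exact₂ _ hT φ hφ

lemma Triangle.yoneda_exact₂_mk (hT : Triangle.mk f g h ∈ distTriang C) (φ : Y ⟶ W)
    (hφ : f ≫ φ = 0) : ∃ ψ : Z ⟶ W, φ = g ≫ ψ :=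
  yoneda_exact₂ _ hT φ hφ

lemma Triangle.yoneda_exact₃_mk (hT : Triangle.mk f g h ∈ distTriang C) (φ : Z ⟶ W)
    (hφ : g ≫ φ = 0) : ∃ ψ : X⟦(1 : ℤ)⟧ ⟶ W, φ = h ≫ ψ :=
  yoneda_exact₃ _ hT φ hφ

lemma Triangle.distinguished_mk_comp_iso {T : Triangle C} (hT : T ∈ distTriang C)
    (e : T.obj₂ ≅ W) : Triangle.mk (T.mor₁ ≫ e.hom) (e.inv ≫ T.mor₂) T.mor₃ ∈ distTriang C :=
  isomorphic_distinguished _ hT _ (Triangle.isoMk _ _ (Iso.refl _) e.symm (Iso.refl _)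
    (by simp [Triangle.mk]) (by simp [Triangle.mk]) (by simp [Triangle.mk]))

lemma Triangle.exists_distinguished_mk_invRotate (hT : Triangle.mk f g h ∈ distTriang C) :
    ∃ (d : Z⟦(-1 : ℤ)⟧ ⟶ X) (c : Y ⟶ Z⟦(-1 : ℤ)⟧⟦(1 : ℤ)⟧), Triangle.mk d f c ∈ distTriang C :=
  ⟨_, _, inv_rot_of_distTriang _ hT⟩

lemma Triangle.exists_id_eq_add_of_eq_comp {X₁ X₂ X₃ Y₁ Y₃ : C} {j : X₁ ⟶ X₂} {p : X₂ ⟶ X₃}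
    {ε : X₃ ⟶ X₁⟦(1 : ℤ)⟧} (hT : Triangle.mk j p ε ∈ distTriang C) {d : Y₁ ⟶ X₂} {a : X₂ ⟶ Y₃}
    {δ : Y₃ ⟶ Y₁⟦(1 : ℤ)⟧} (hT' : Triangle.mk d a δ ∈ distTriang C) (α : X₂ ⟶ X₁)
    (ha : a = α ≫ j ≫ a) (horth : ∀ f : X₁ ⟶ Y₁, f = 0) :
    ∃ (s : X₁⟦(1 : ℤ)⟧ ⟶ X₃) (t : X₃ ⟶ Y₁), 𝟙 X₃ = ε ≫ s + t ≫ d ≫ p := by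
  have hjp : j ≫ p = 0 := comp_distTriang_mor_zero₁₂ _ hT
  obtain ⟨y, hy⟩ := Triangle.coyoneda_exact₂_mk hT' (𝟙 X₂ - α ≫ j)
    (by rw [Preadditive.sub_comp, Category.id_comp, Category.assoc, ← ha, sub_self])
  obtain ⟨t, rfl⟩ := Triangle.yoneda_exact₂_mk hT y (horth _)
  have hp : p = p ≫ t ≫ d ≫ p := by simpa [Preadditive.sub_comp, hjp] using hy =≫ p
  obtain ⟨s, hs⟩ := Triangle.yoneda_exact₃_mk hT (𝟙 X₃ - t ≫ d ≫ p)
    (by rw [Preadditive.comp_sub, Category.comp_id, ← hp, sub_self])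
  exact ⟨s, t, by rw [← hs, sub_add_cancel]⟩

end CategoryTheory.Pretriangulated

section Endomorphisms

variable {C : Type*} [Category C]

lemma compPow_eq_pow {X : C} (e : X ⟶ X) (k : ℕ) : compPow e k = End.of e ^ k := by
  induction k with
  | zero => rfl
  | succ k ih => rw [compPow.eq_2, ih, pow_succ', End.mul_def]

lemma pow_comp_eq_comp_pow {X Y : C} {e : End X} {e' : End Y} {π : X ⟶ Y} (h : e ≫ π = π ≫ e')
    (k : ℕ) : (e ^ k : End X) ≫ π = π ≫ (e' ^ k : End Y) := by
  induction k with
  | zero => simp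
  | succ k ih => simp only [pow_succ, End.mul_def, Category.assoc, ih, reassoc_of% h]

lemma CategoryTheory.Functor.map_pow {D : Type*} [Category D] (G : C ⥤ D) {X : C} (e : End X)
    (k : ℕ) : G.map (e ^ k) = End.of (G.map e) ^ k :=
  _root_.map_pow (G.mapEnd X) e k

variable [Preadditive C]

lemma isNilpotent_of_pow_eq_comp {X Y : C} {e : End X} {u : X ⟶ Y} {ι : Y ⟶ X} {K : ℕ}
    (h : e ^ (K + 1) = u ≫ ι) (hn : IsNilpotent (End.of (ι ≫ u))) : IsNilpotent e := by
  obtain ⟨N, hN⟩ := hn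
  have key (i : ℕ) : e ^ ((K + 1) * (i + 1)) = u ≫ (End.of (ι ≫ u) ^ i : End Y) ≫ ι := by
    induction i with
    | zero => simpa using h
    | succ i ih =>
      rw [mul_add_one, pow_add, ih, h, pow_succ (End.of (ι ≫ u)), End.mul_def, End.mul_def]
      simp
  exact ⟨(K + 1) * (N + 1), by rw [key, hN]; simp⟩

lemma comp_eq_zero_of_isNilpotent {A X Y : C} {p : A ⟶ X} {u : X ⟶ X} {g : X ⟶ A}
    (hpu : p ≫ u = 0) (hn : IsNilpotent (End.of (𝟙 X - u - g ≫ p))) {f : X ⟶ Y}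
    (hf : g ≫ p ≫ f = 0) : p ≫ f = 0 := by
  obtain ⟨N, hN⟩ := hn
  set e := End.of (𝟙 X - u - g ≫ p)
  have step {f : X ⟶ Y} (hf : g ≫ p ≫ f = 0) : p ≫ e ≫ f = p ≫ f := by
    simp [e, Preadditive.comp_sub, Preadditive.sub_comp, reassoc_of% hpu, hf]
  have key (i : ℕ) : ∀ f : X ⟶ Y, g ≫ p ≫ f = 0 → p ≫ (e ^ i : End X) ≫ f = p ≫ f := by
    induction i with
    | zero => simp
    | succ i ih =>
      intro f hf
      have hf' : g ≫ p ≫ e ≫ f = 0 := by rw [step hf, hf]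
      rw [pow_succ', End.mul_def, Category.assoc, ih _ hf', step hf]
  simpa [hN] using (key N f hf).symm

end Endomorphisms

namespace WeightStructure

variable {C : Type*} [Category C] [Preadditive C] [HasZeroObject C]
  [HasShift C ℤ] [∀ n : ℤ, (shiftFunctor C n).Additive] [Pretriangulated C]

section Basic

variable (w : WeightStructure C)

lemma mem_le_of_iso {X Y : C} (e : X ≅ Y) (h : X ∈ w.le) : Y ∈ w.le :=
  w.le_retract h e.inv e.hom e.inv_hom_id

lemma mem_ge_of_iso {X Y : C} (e : X ≅ Y) (h : X ∈ w.ge) : Y ∈ w.ge :=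
  w.ge_retract h e.inv e.hom e.inv_hom_id

lemma mem_Le_of_retract {k : ℤ} {X Y : C} (hY : Y ∈ w.Le k) (i : X ⟶ Y) (r : Y ⟶ X)
    (h : i ≫ r = 𝟙 X) : X ∈ w.Le k :=
  w.le_retract hY (i⟦-k⟧') (r⟦-k⟧') (by simp [← Functor.map_comp, h])

lemma mem_Ge_of_retract {k : ℤ} {X Y : C} (hY : Y ∈ w.Ge k) (i : X ⟶ Y) (r : Y ⟶ X)
    (h : i ≫ r = 𝟙 X) : X ∈ w.Ge k :=
  w.ge_retract hY (i⟦-k⟧') (r⟦-k⟧') (by simp [← Functor.map_comp, h])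

lemma shift_mem_Le {k : ℤ} {X : C} (h : X ∈ w.Le k) (j : ℤ) : X⟦j⟧ ∈ w.Le (k + j) :=
  w.mem_le_of_iso ((shiftFunctorAdd' C j (-(k + j)) (-k) (by ring)).app X) h

lemma shift_mem_Ge {k : ℤ} {X : C} (h : X ∈ w.Ge k) (j : ℤ) : X⟦j⟧ ∈ w.Ge (k + j) :=
  w.mem_ge_of_iso ((shiftFunctorAdd' C j (-(k + j)) (-k) (by ring)).app X) h

lemma shift_neg_mem_heart {k : ℤ} {X : C} (h : X ∈ w.Le k ∩ w.Ge k) :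
    X⟦-k⟧ ∈ w.Le 0 ∩ w.Ge 0 := by
  simpa using And.intro (w.shift_mem_Le h.1 (-k)) (w.shift_mem_Ge h.2 (-k))

lemma Le_monotone : Monotone w.Le :=
  monotone_int_of_le_succ fun k X h ↦
    w.mem_le_of_iso ((shiftFunctorAdd' C (-k) (-1) (-(k + 1)) (by ring)).symm.app X) (w.le_shift h)

lemma Ge_antitone : Antitone w.Ge :=
  antitone_int_of_succ_le fun k X h ↦
    w.mem_ge_of_iso ((shiftFunctorAdd' C (-(k + 1)) 1 (-k) (by ring)).symm.app X) (w.ge_shift h)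

lemma hom_eq_zero {j i : ℤ} (hji : j < i) {X Y : C} (hX : X ∈ w.Le j) (hY : Y ∈ w.Ge i)
    (f : X ⟶ Y) : f = 0 := by
  have hY' : Y⟦-(j + 1)⟧ ∈ w.ge := w.Ge_antitone (show j + 1 ≤ i by omega) hY
  let e : Y⟦-j⟧ ≅ Y⟦-(j + 1)⟧⟦(1 : ℤ)⟧ := (shiftFunctorAdd' C (-(j + 1)) 1 (-j) (by ring)).app Y
  apply (shiftFunctor C (-j)).map_injective
  rw [Functor.map_zero]
  exact zero_of_comp_mono e.hom (w.orth hX hY' _)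

lemma exists_isWeightDecomp (k : ℤ) (M : C) :
    ∃ (A B : C) (a : A ⟶ M) (b : M ⟶ B) (δ : B ⟶ A⟦(1 : ℤ)⟧), w.IsWeightDecomp k a b δ := by
  obtain ⟨L, R, f, g, δ, hT, hL, hR⟩ := w.decomp (M⟦-k⟧)
  refine ⟨L⟦k⟧, R⟦k⟧, _, _, _,
    Triangle.distinguished_mk_comp_iso (Triangle.shift_distinguished _ hT k)
      ((shiftFunctorCompIsoId C (-k) k (by ring)).app M), ?_, ?_⟩
  · exact w.mem_le_of_iso ((shiftFunctorCompIsoId C k (-k) (by ring)).symm.app L) hL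
  · exact w.mem_ge_of_iso ((shiftFunctorAdd' C k (-(k + 1)) (-1) (by ring)).app R) hR

lemma mem_Le_of_distTriang {k : ℤ} {T : Triangle C} (hT : T ∈ distTriang C)
    (h₁ : T.obj₁ ∈ w.Le k) (h₃ : T.obj₃ ∈ w.Le k) : T.obj₂ ∈ w.Le k := by
  obtain ⟨L, R, l, r, δ, hD, hL, hR⟩ := w.exists_isWeightDecomp k T.obj₂
  obtain ⟨ρ, hρ⟩ := Triangle.yoneda_exact₂ T hT r (w.hom_eq_zero (by omega) h₁ hR _)
  have hr : r = 0 := by rw [hρ, w.hom_eq_zero (by omega) h₃ hR ρ, comp_zero]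
  obtain ⟨s, hs⟩ := Triangle.coyoneda_exact₂ _ hD (𝟙 T.obj₂)
    (show 𝟙 T.obj₂ ≫ r = 0 by rw [hr, comp_zero])
  exact w.mem_Le_of_retract hL s l hs.symm

lemma mem_Ge_of_distTriang {k : ℤ} {T : Triangle C} (hT : T ∈ distTriang C)
    (h₁ : T.obj₁ ∈ w.Ge k) (h₃ : T.obj₃ ∈ w.Ge k) : T.obj₂ ∈ w.Ge k := by
  obtain ⟨L, R, l, r, δ, hD, hL, hR⟩ := w.exists_isWeightDecomp (k - 1) T.obj₂
  rw [sub_add_cancel] at hR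
  obtain ⟨c, hc⟩ := Triangle.coyoneda_exact₂ T hT l (w.hom_eq_zero (by omega) hL h₃ _)
  have hl : l = 0 := by rw [hc, w.hom_eq_zero (by omega) hL h₁ c, zero_comp]
  obtain ⟨s, hs⟩ := Triangle.yoneda_exact₂ _ hD (𝟙 T.obj₂)
    (show l ≫ 𝟙 T.obj₂ = 0 by rw [hl, zero_comp])
  exact w.mem_Ge_of_retract hR r s hs.symm

end Basic

section Decompositions

variable {w : WeightStructure C}

lemma IsWeightDecomp.obj₃_mem_Le {k l : ℤ} {A M B : C} {a : A ⟶ M} {b : M ⟶ B}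
    {δ : B ⟶ A⟦(1 : ℤ)⟧} (hD : w.IsWeightDecomp k a b δ) (hM : M ∈ w.Le l) (hkl : k < l) :
    B ∈ w.Le l :=
  w.mem_Le_of_distTriang (rot_of_distTriang _ hD.1) hM
    (w.Le_monotone (show k + 1 ≤ l by omega) (w.shift_mem_Le hD.2.1 1))

lemma IsWeightDecomp.obj₁_mem_Ge {k l : ℤ} {A M B : C} {a : A ⟶ M} {b : M ⟶ B}
    {δ : B ⟶ A⟦(1 : ℤ)⟧} (hD : w.IsWeightDecomp k a b δ) (hM : M ∈ w.Ge l) (hlk : l ≤ k) :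
    A ∈ w.Ge l :=
  w.mem_Ge_of_distTriang (inv_rot_of_distTriang _ hD.1)
    (w.Ge_antitone (show l ≤ k + 1 + -1 by omega) (w.shift_mem_Ge hD.2.2 (-1))) hM

lemma WithoutWeights.exists_eq_comp {m n : ℤ} (hmn : m ≤ n) {M : C}
    (hM : w.WithoutWeights m n M) {A B A' Ā : C} {a : A ⟶ M} {b : M ⟶ B} {δ : B ⟶ A⟦(1 : ℤ)⟧}
    (ha : w.IsWeightDecomp n a b δ) {j : A' ⟶ A} {p : A ⟶ Ā} {ε : Ā ⟶ A'⟦(1 : ℤ)⟧}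
    (hj : w.IsWeightDecomp (m - 1) j p ε) : ∃ α : A ⟶ A', a = α ≫ j ≫ a := by
  obtain ⟨P, Q, P', Q', a₀, b₀, δ₀, a₁, b₁, δ₁, h₀, h₁, hz⟩ := hM
  have hĀ : Ā ∈ w.Ge m := by simpa using hj.2.2
  obtain ⟨φ₀, hφ₀⟩ :=
    Triangle.coyoneda_exact₂_mk h₀.1 a (w.hom_eq_zero (by omega) ha.2.1 h₀.2.2 _)
  obtain ⟨φ₁, hφ₁⟩ := Triangle.coyoneda_exact₂_mk h₁.1 a (by simpa [hφ₀] using φ₀ ≫= hz)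
  obtain ⟨κ, rfl⟩ :=
    Triangle.coyoneda_exact₂_mk ha.1 a₁ (w.hom_eq_zero (by omega) h₁.2.1 ha.2.2 _)
  obtain ⟨c, rfl⟩ := Triangle.coyoneda_exact₂_mk hj.1 κ (w.hom_eq_zero (by omega) h₁.2.1 hĀ _)
  exact ⟨φ₁ ≫ c, by simpa using hφ₁⟩

end Decompositions

variable {D : Type*} [Category D] [HasShift D ℤ]

section Heart

variable (w : WeightStructure C) (F : C ⥤ D)

def IsFullOnHeart : Prop :=
  ∀ X Y : C, X ∈ w.Le 0 ∩ w.Ge 0 → Y ∈ w.Le 0 ∩ w.Ge 0 →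
    ∀ q : F.obj X ⟶ F.obj Y, ∃ p : X ⟶ Y, F.map p = q

def HasNilKernelOnHeart [Preadditive D] : Prop :=
  ∀ X ∈ w.Le 0 ∩ w.Ge 0, ∀ e : End X, F.map e = 0 → IsNilpotent e

variable {w F} [F.CommShift ℤ]

lemma IsFullOnHeart.exists_map_eq (hfull : w.IsFullOnHeart F) {k : ℤ} {X Y : C}
    (hX : X ∈ w.Le k ∩ w.Ge k) (hY : Y ∈ w.Le k ∩ w.Ge k) (q : F.obj X ⟶ F.obj Y) :
    ∃ g : X ⟶ Y, F.map g = q := by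
  obtain ⟨g', hg'⟩ := hfull _ _ (w.shift_neg_mem_heart hX) (w.shift_neg_mem_heart hY)
    ((F.commShiftIso (-k)).hom.app X ≫ q⟦-k⟧' ≫ (F.commShiftIso (-k)).inv.app Y)
  obtain ⟨g, rfl⟩ := (shiftFunctor C (-k)).map_surjective g'
  refine ⟨g, (shiftFunctor D (-k)).map_injective ?_⟩
  simpa [hg'] using (F.commShiftIso_hom_naturality g (-k)).symm

lemma HasNilKernelOnHeart.isNilpotent [Preadditive D] (hnil : w.HasNilKernelOnHeart F) {k : ℤ}
    {X : C} (hX : X ∈ w.Le k ∩ w.Ge k) (e : End X) (he : F.map e = 0) : IsNilpotent e := by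
  have hFe : F.map (e⟦-k⟧') = 0 := by
    have h := F.commShiftIso_hom_naturality e (-k)
    rw [he, Functor.map_zero, comp_zero] at h
    exact zero_of_comp_mono _ h
  obtain ⟨N, hN⟩ := hnil _ (w.shift_neg_mem_heart hX) _ hFe
  exact ⟨N, (shiftFunctor C (-k)).map_injective (by rw [Functor.map_pow, hN, Functor.map_zero])⟩

end Heart

variable [Preadditive D] [HasZeroObject D] [∀ n : ℤ, (shiftFunctor D n).Additive]
  [Pretriangulated D]

structure IsWeightExact (w : WeightStructure C) (w' : WeightStructure D) (F : C ⥤ D) : Prop where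
  map_le : ∀ X ∈ w.le, F.obj X ∈ w'.le
  map_ge : ∀ X ∈ w.ge, F.obj X ∈ w'.ge

namespace IsWeightExact

variable {w : WeightStructure C} {w' : WeightStructure D} {F : C ⥤ D} [F.CommShift ℤ]

lemma map_mem_Le (hF : IsWeightExact w w' F) {k : ℤ} {X : C} (h : X ∈ w.Le k) :
    F.obj X ∈ w'.Le k :=
  w'.mem_le_of_iso ((F.commShiftIso (-k)).app X) (hF.map_le _ h)

lemma map_mem_Ge (hF : IsWeightExact w w' F) {k : ℤ} {X : C} (h : X ∈ w.Ge k) :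
    F.obj X ∈ w'.Ge k :=
  w'.mem_ge_of_iso ((F.commShiftIso (-k)).app X) (hF.map_ge _ h)

variable [F.IsTriangulated]

lemma map_isWeightDecomp (hF : IsWeightExact w w' F) {k : ℤ} {A M B : C} {a : A ⟶ M}
    {b : M ⟶ B} {δ : B ⟶ A⟦(1 : ℤ)⟧} (hD : w.IsWeightDecomp k a b δ) :
    w'.IsWeightDecomp k (F.map a) (F.map b) (F.map δ ≫ (F.commShiftIso (1 : ℤ)).hom.app A) :=
  ⟨F.map_distinguished _ hD.1, hF.map_mem_Le hD.2.1, hF.map_mem_Ge hD.2.2⟩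

lemma exists_map_eq (hF : IsWeightExact w w' F) (hfull : w.IsFullOnHeart F) {k : ℤ} {X Y : C}
    (hX : X ∈ w.Le k) (hY : Y ∈ w.Ge k) (q : F.obj X ⟶ F.obj Y) : ∃ g : X ⟶ Y, F.map g = q := by
  obtain ⟨X', X₀, i, p, δ, hXd⟩ := w.exists_isWeightDecomp (k - 1) X
  obtain ⟨Y₀, Y', u, v, δ', hYd⟩ := w.exists_isWeightDecomp k Y
  have hX₀ : X₀ ∈ w.Le k ∩ w.Ge k := ⟨hXd.obj₃_mem_Le hX (by omega), by simpa using hXd.2.2⟩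
  have hY₀ : Y₀ ∈ w.Le k ∩ w.Ge k := ⟨hYd.2.1, hYd.obj₁_mem_Ge hY le_rfl⟩
  obtain ⟨q₁, rfl⟩ := Triangle.yoneda_exact₂_mk (hF.map_isWeightDecomp hXd).1 q
    (w'.hom_eq_zero (by omega) (hF.map_mem_Le hXd.2.1) (hF.map_mem_Ge hY) _)
  obtain ⟨q₀, rfl⟩ := Triangle.coyoneda_exact₂_mk (hF.map_isWeightDecomp hYd).1 q₁
    (w'.hom_eq_zero (by omega) (hF.map_mem_Le hX₀.1) (hF.map_mem_Ge hYd.2.2) _)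
  obtain ⟨g₀, rfl⟩ := hfull.exists_map_eq hX₀ hY₀ q₀
  exact ⟨p ≫ g₀ ≫ u, by simp⟩

lemma exists_map_eq_zero_of_isWeightDecomp (hF : IsWeightExact w w' F)
    (hfull : w.IsFullOnHeart F) {k : ℤ} {V' V V'' : C} {ι : V' ⟶ V} {π : V ⟶ V''}
    {dl : V'' ⟶ V'⟦(1 : ℤ)⟧} (hD : w.IsWeightDecomp k ι π dl) (e : V ⟶ V) (he : F.map e = 0) :
    ∃ e' : V'' ⟶ V'', F.map e' = 0 ∧ e ≫ π = π ≫ e' := by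
  obtain ⟨e', he'⟩ := Triangle.yoneda_exact₂_mk hD.1 (e ≫ π)
    (by rw [← Category.assoc]; exact w.hom_eq_zero (by omega) hD.2.1 hD.2.2 _)
  obtain ⟨y, hy⟩ := Triangle.yoneda_exact₃_mk (hF.map_isWeightDecomp hD).1 (F.map e')
    (by rw [← F.map_comp, ← he', F.map_comp, he, zero_comp])
  obtain ⟨g, hg⟩ := hF.exists_map_eq hfull (w.shift_mem_Le hD.2.1 1) hD.2.2
    ((F.commShiftIso (1 : ℤ)).hom.app V' ≫ y)
  have hπ : π ≫ dl = 0 := comp_distTriang_mor_zero₂₃ _ hD.1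
  refine ⟨e' - dl ≫ g, by simp [hg, hy], ?_⟩
  rw [Preadditive.comp_sub, reassoc_of% hπ, zero_comp, sub_zero, he']

lemma isNilpotent_of_map_eq_zero (hF : IsWeightExact w w' F) (hfull : w.IsFullOnHeart F)
    (hnil : w.HasNilKernelOnHeart F) {k l : ℤ} (hkl : k ≤ l) {V : C} (hl : V ∈ w.Le l)
    (hk : V ∈ w.Ge k) (e : End V) (he : F.map e = 0) : IsNilpotent e := by
  induction l, hkl using Int.leInduction generalizing V with
  | base => exact hnil.isNilpotent ⟨hl, hk⟩ e he
  | succ l hkl ih =>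
    obtain ⟨V', V'', ι, π, dl, hD⟩ := w.exists_isWeightDecomp l V
    obtain ⟨e', he'0, he'⟩ := hF.exists_map_eq_zero_of_isWeightDecomp hfull hD e he
    obtain ⟨K, hK⟩ := hnil.isNilpotent ⟨hD.obj₃_mem_Le hl (by omega), hD.2.2⟩ (End.of e') he'0
    obtain ⟨u, hu⟩ := Triangle.coyoneda_exact₂_mk hD.1 (e ^ (K + 1))
      (by rw [pow_comp_eq_comp_pow he', pow_succ, hK, zero_mul, comp_zero])
    refine isNilpotent_of_pow_eq_comp hu (IsNilpotent.of_pow (m := 2)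
      (ih hD.2.1 (hD.obj₁_mem_Ge hk (by omega)) _ ?_))
    rw [pow_two, End.mul_def]
    simp only [Category.assoc]
    rw [← Category.assoc u, ← hu, F.map_comp, F.map_comp, Functor.map_pow, he]
    simp

lemma exists_isNilpotent_id_sub (hF : IsWeightExact w w' F) (hfull : w.IsFullOnHeart F)
    (hnil : w.HasNilKernelOnHeart F) {m n : ℤ} (hmn : m ≤ n) {A M B A' Ā : C} {a : A ⟶ M}
    {b : M ⟶ B} {δ : B ⟶ A⟦(1 : ℤ)⟧} (ha : w.IsWeightDecomp n a b δ) {j : A' ⟶ A} {p : A ⟶ Ā}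
    {ε : Ā ⟶ A'⟦(1 : ℤ)⟧} (hj : w.IsWeightDecomp (m - 1) j p ε) (α : F.obj A ⟶ F.obj A')
    (hα : F.map a = α ≫ F.map j ≫ F.map a) :
    ∃ (u : Ā ⟶ Ā) (g : Ā ⟶ A), p ≫ u = 0 ∧ g ≫ a = 0 ∧
      IsNilpotent (End.of (𝟙 Ā - u - g ≫ p)) := by
  obtain ⟨d, c, hT⟩ := Triangle.exists_distinguished_mk_invRotate ha.1
  have hda : d ≫ a = 0 := comp_distTriang_mor_zero₁₂ _ hT
  have hpε : p ≫ ε = 0 := comp_distTriang_mor_zero₂₃ _ hj.1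
  have hĀ : Ā ∈ w.Le n ∩ w.Ge m := ⟨hj.obj₃_mem_Le ha.2.1 (by omega), by simpa using hj.2.2⟩
  have hB : B⟦(-1 : ℤ)⟧ ∈ w.Ge n := by simpa using w.shift_mem_Ge ha.2.2 (-1)
  have hA' : A'⟦(1 : ℤ)⟧ ∈ w.Le m := by simpa using w.shift_mem_Le hj.2.1 1
  obtain ⟨s, t, hst⟩ := Triangle.exists_id_eq_add_of_eq_comp (hF.map_isWeightDecomp hj).1
    (F.map_distinguished (Triangle.mk d a c) hT) α hα
    (fun f ↦ w'.hom_eq_zero (by omega) (hF.map_mem_Le hj.2.1) (hF.map_mem_Ge hB) f)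
  obtain ⟨g₀, hg₀⟩ := hF.exists_map_eq hfull hA' hĀ.2 ((F.commShiftIso (1 : ℤ)).hom.app A' ≫ s)
  obtain ⟨g₁, hg₁⟩ := hF.exists_map_eq hfull hĀ.1 hB t
  refine ⟨ε ≫ g₀, g₁ ≫ d, by rw [reassoc_of% hpε, zero_comp],
    by rw [Category.assoc, hda, comp_zero],
    hF.isNilpotent_of_map_eq_zero hfull hnil hmn hĀ.1 hĀ.2 _ ?_⟩
  simp only [Functor.map_sub, Functor.map_comp, hg₀, hg₁, Category.assoc]
  rw [sub_sub, sub_eq_zero, F.map_id, hst, Category.assoc]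
  rfl

end IsWeightExact

end WeightStructure

/-- conservativity of weight-exact functors with respect to objects
without weights `m,…,n`. -/
theorem withoutWeights_of_map {C : Type*} [Category C] [Preadditive C] [HasZeroObject C]
    [HasShift C ℤ] [∀ n : ℤ, (CategoryTheory.shiftFunctor C n).Additive] [Pretriangulated C]
    {D : Type*} [Category D] [Preadditive D] [HasZeroObject D]
    [HasShift D ℤ] [∀ n : ℤ, (CategoryTheory.shiftFunctor D n).Additive] [Pretriangulated D]
    (w : WeightStructure C) (w' : WeightStructure D)
    (F : C ⥤ D) [F.CommShift ℤ] [F.IsTriangulated]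
    -- `F` is weight-exact
    (hle : ∀ X ∈ w.le, F.obj X ∈ w'.le) (hge : ∀ X ∈ w.ge, F.obj X ∈ w'.ge)
    -- the induced functor on hearts is full
    (hfull : ∀ X Y : C, X ∈ w.Le 0 ∩ w.Ge 0 → Y ∈ w.Le 0 ∩ w.Ge 0 →
      ∀ q : F.obj X ⟶ F.obj Y, ∃ p : X ⟶ Y, F.map p = q)
    -- endomorphisms in the heart killed by the induced functor are nilpotent
    (hnilp : ∀ X : C, X ∈ w.Le 0 ∩ w.Ge 0 → ∀ e : X ⟶ X, F.map e = 0 →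
      ∃ k : ℕ, compPow e (k + 1) = 0)
    (m n : ℤ) (hmn : m ≤ n) (M : C)
    (hFM : w'.WithoutWeights m n (F.obj M)) :
    w.WithoutWeights m n M := by
  have hF : WeightStructure.IsWeightExact w w' F := ⟨hle, hge⟩
  have hnil : w.HasNilKernelOnHeart F := fun X hX e he ↦ by
    obtain ⟨k, hk⟩ := hnilp X hX e he
    exact ⟨k + 1, by rwa [← compPow_eq_pow]⟩
  obtain ⟨A, B, a, b, δ, ha⟩ := w.exists_isWeightDecomp n M
  obtain ⟨A', Ā, j, p, ε, hj⟩ := w.exists_isWeightDecomp (m - 1) A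
  obtain ⟨A'', B', a', b', δ', ha'⟩ := w.exists_isWeightDecomp (m - 1) M
  obtain ⟨α, hα⟩ := hFM.exists_eq_comp hmn (hF.map_isWeightDecomp ha) (hF.map_isWeightDecomp hj)
  obtain ⟨u, g, hpu, hga, hnilpotent⟩ := hF.exists_isNilpotent_id_sub hfull hnil hmn ha hj α hα
  obtain ⟨f, hf⟩ := Triangle.yoneda_exact₂_mk hj.1 (a ≫ b')
    (by rw [← Category.assoc]; exact w.hom_eq_zero (by omega) hj.2.1 ha'.2.2 _)
  have hpf : p ≫ f = 0 :=
    comp_eq_zero_of_isNilpotent hpu hnilpotent (by rw [← hf, reassoc_of% hga, zero_comp])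
  exact ⟨A, B, A'', B', a, b, δ, a', b', δ', ha, ha', by rw [Category.id_comp, hf, hpf]⟩
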